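/- arXiv:2507.23469 — 9 statements merged into one kernel-verified Lean document; each statement's English description precedes it below -/
import Mathlib

section
/- Suppose w : ℝ × ℝ → ℝ is smooth (C^∞) and satisfies the defocusing mKdV equation ∂_t w + ∂_x^3 w − 6 w^2 ∂_x w = 0 at every point (x,t) ∈ ℝ². Then the Miura transform v := ∂_x w + w^2 satisfies the KdV equation ∂_t v + ∂_x^3 v − 6 v ∂_x v = 0 at every point of ℝ². -/
/-- Partial derivative in the first variable (x). -/
noncomputable def pdx (u : ℝ × ℝ → ℝ) : ℝ × ℝ → ℝ :=
  fun p => deriv (fun x => u (x, p.2)) p.1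

/-- Partial derivative in the second variable (t). -/
noncomputable def pdt (u : ℝ × ℝ → ℝ) : ℝ × ℝ → ℝ :=
  fun p => deriv (fun t => u (p.1, t)) p.2

lemma sliceX_diff {f : ℝ × ℝ → ℝ} (hf : ContDiff ℝ (⊤ : ℕ∞) f) (t : ℝ) :
    Differentiable ℝ (fun x => f (x, t)) :=
  (hf.differentiable (by simp)).comp (differentiable_id.prodMk (differentiable_const t))

lemma sliceT_diff {f : ℝ × ℝ → ℝ} (hf : ContDiff ℝ (⊤ : ℕ∞) f) (x : ℝ) :
    Differentiable ℝ (fun t => f (x, t)) :=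
  (hf.differentiable (by simp)).comp ((differentiable_const x).prodMk differentiable_id)

lemma pdx_eq_fderiv {u : ℝ × ℝ → ℝ} (hu : Differentiable ℝ u) (p : ℝ × ℝ) :
    pdx u p = fderiv ℝ u p ((1 : ℝ), (0 : ℝ)) := by
  have h1 : HasDerivAt (fun x : ℝ => (x, p.2)) ((1 : ℝ), (0 : ℝ)) p.1 :=
    (hasDerivAt_id p.1).prodMk (hasDerivAt_const p.1 p.2)
  have h2 := ((hu (p.1, p.2)).hasFDerivAt.comp_hasDerivAt p.1 h1)
  simpa [pdx, Function.comp_def] using h2.deriv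

lemma pdt_eq_fderiv {u : ℝ × ℝ → ℝ} (hu : Differentiable ℝ u) (p : ℝ × ℝ) :
    pdt u p = fderiv ℝ u p ((0 : ℝ), (1 : ℝ)) := by
  have h1 : HasDerivAt (fun t : ℝ => (p.1, t)) ((0 : ℝ), (1 : ℝ)) p.2 :=
    (hasDerivAt_const p.2 p.1).prodMk (hasDerivAt_id p.2)
  have h2 := ((hu (p.1, p.2)).hasFDerivAt.comp_hasDerivAt p.2 h1)
  simpa [pdt, Function.comp_def] using h2.deriv

lemma smooth_pdx {u : ℝ × ℝ → ℝ} (hu : ContDiff ℝ (⊤ : ℕ∞) u) : ContDiff ℝ (⊤ : ℕ∞) (pdx u) := by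
  have : pdx u = fun p => fderiv ℝ u p ((1 : ℝ), (0 : ℝ)) :=
    funext fun p => pdx_eq_fderiv (hu.differentiable (by simp)) p
  rw [this]
  exact (hu.fderiv_right (by simp)).clm_apply contDiff_const

lemma smooth_pdt {u : ℝ × ℝ → ℝ} (hu : ContDiff ℝ (⊤ : ℕ∞) u) : ContDiff ℝ (⊤ : ℕ∞) (pdt u) := by
  have : pdt u = fun p => fderiv ℝ u p ((0 : ℝ), (1 : ℝ)) :=
    funext fun p => pdt_eq_fderiv (hu.differentiable (by simp)) p
  rw [this]
  exact (hu.fderiv_right (by simp)).clm_apply contDiff_const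

lemma pdx_add {f g : ℝ × ℝ → ℝ} (hf : ContDiff ℝ (⊤ : ℕ∞) f) (hg : ContDiff ℝ (⊤ : ℕ∞) g) :
    pdx (fun q => f q + g q) = fun p => pdx f p + pdx g p := by
  funext p
  exact deriv_add ((sliceX_diff hf p.2) p.1) ((sliceX_diff hg p.2) p.1)

lemma pdx_sub {f g : ℝ × ℝ → ℝ} (hf : ContDiff ℝ (⊤ : ℕ∞) f) (hg : ContDiff ℝ (⊤ : ℕ∞) g) :
    pdx (fun q => f q - g q) = fun p => pdx f p - pdx g p := by
  funext p
  exact deriv_sub ((sliceX_diff hf p.2) p.1) ((sliceX_diff hg p.2) p.1)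

lemma pdx_mul {f g : ℝ × ℝ → ℝ} (hf : ContDiff ℝ (⊤ : ℕ∞) f) (hg : ContDiff ℝ (⊤ : ℕ∞) g) :
    pdx (fun q => f q * g q) = fun p => pdx f p * g p + f p * pdx g p := by
  funext p
  exact deriv_mul ((sliceX_diff hf p.2) p.1) ((sliceX_diff hg p.2) p.1)

lemma pdx_const_mul {f : ℝ × ℝ → ℝ} (hf : ContDiff ℝ (⊤ : ℕ∞) f) (c : ℝ) :
    pdx (fun q => c * f q) = fun p => c * pdx f p := by
  funext p
  exact deriv_const_mul c ((sliceX_diff hf p.2) p.1)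

lemma pdx_sq {f : ℝ × ℝ → ℝ} (hf : ContDiff ℝ (⊤ : ℕ∞) f) :
    pdx (fun q => f q ^ 2) = fun p => 2 * f p * pdx f p := by
  funext p
  have this : deriv (fun x => f (x, p.2) ^ 2) p.1 = _ := ((((sliceX_diff hf p.2) p.1).hasDerivAt.pow 2).deriv :
    deriv (fun x => f (x, p.2) ^ 2) p.1 = _)
  simpa [pdx] using this

lemma pdt_add {f g : ℝ × ℝ → ℝ} (hf : ContDiff ℝ (⊤ : ℕ∞) f) (hg : ContDiff ℝ (⊤ : ℕ∞) g) :
    pdt (fun q => f q + g q) = fun p => pdt f p + pdt g p := by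
  funext p
  exact deriv_add ((sliceT_diff hf p.1) p.2) ((sliceT_diff hg p.1) p.2)

lemma pdt_sq {f : ℝ × ℝ → ℝ} (hf : ContDiff ℝ (⊤ : ℕ∞) f) :
    pdt (fun q => f q ^ 2) = fun p => 2 * f p * pdt f p := by
  funext p
  have this : deriv (fun t => f (p.1, t) ^ 2) p.2 = _ := ((((sliceT_diff hf p.1) p.2).hasDerivAt.pow 2).deriv :
    deriv (fun t => f (p.1, t) ^ 2) p.2 = _)
  simpa [pdt] using this

lemma clairaut {u : ℝ × ℝ → ℝ} (hu : ContDiff ℝ (⊤ : ℕ∞) u) : pdt (pdx u) = pdx (pdt u) := by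
  funext p
  have hd : Differentiable ℝ u := hu.differentiable (by simp)
  have hd2 : Differentiable ℝ (fderiv ℝ u) := (hu.fderiv_right (m := (⊤ : ℕ∞)) (by simp)).differentiable (by simp)
  have hsymm : fderiv ℝ (fderiv ℝ u) p ((0:ℝ),(1:ℝ)) ((1:ℝ),(0:ℝ))
      = fderiv ℝ (fderiv ℝ u) p ((1:ℝ),(0:ℝ)) ((0:ℝ),(1:ℝ)) :=
    (hu.contDiffAt.isSymmSndFDerivAt (by rw [minSmoothness_of_isRCLikeNormedField]; exact WithTop.coe_le_coe.mpr le_top)) _ _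
  have key : ∀ v : ℝ × ℝ, ∀ q : ℝ × ℝ,
      fderiv ℝ (fun q => fderiv ℝ u q v) q = (fderiv ℝ (fderiv ℝ u) q).flip v := by
    intro v q
    have h := ((ContinuousLinearMap.apply ℝ ℝ v).hasFDerivAt).comp q (hd2 q).hasFDerivAt
    have := h.fderiv
    rw [show ((ContinuousLinearMap.apply ℝ ℝ v) ∘ fderiv ℝ u) = fun q => fderiv ℝ u q v from rfl] at this
    rw [this]; rfl
  have e1 : pdt (pdx u) p = fderiv ℝ (fderiv ℝ u) p ((0:ℝ),(1:ℝ)) ((1:ℝ),(0:ℝ)) := by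
    have hx : pdx u = fun q => fderiv ℝ u q ((1:ℝ),(0:ℝ)) := funext fun q => pdx_eq_fderiv hd q
    rw [hx, pdt_eq_fderiv, key]
    · rfl
    · have : ContDiff ℝ (⊤ : ℕ∞) (fun q => fderiv ℝ u q ((1:ℝ),(0:ℝ))) :=
        (hu.fderiv_right (by simp)).clm_apply contDiff_const
      exact this.differentiable (by simp)
  have e2 : pdx (pdt u) p = fderiv ℝ (fderiv ℝ u) p ((1:ℝ),(0:ℝ)) ((0:ℝ),(1:ℝ)) := by
    have ht : pdt u = fun q => fderiv ℝ u q ((0:ℝ),(1:ℝ)) := funext fun q => pdt_eq_fderiv hd q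
    rw [ht, pdx_eq_fderiv, key]
    · rfl
    · have : ContDiff ℝ (⊤ : ℕ∞) (fun q => fderiv ℝ u q ((0:ℝ),(1:ℝ))) :=
        (hu.fderiv_right (by simp)).clm_apply contDiff_const
      exact this.differentiable (by simp)
  rw [e1, e2, hsymm]

/-- If a smooth `w` satisfies the defocusing mKdV equation
`∂ₜ w + ∂ₓ³ w − 6 w² ∂ₓ w = 0` everywhere, then its Miura transform
`v = ∂ₓ w + w²` satisfies the KdV equation `∂ₜ v + ∂ₓ³ v − 6 v ∂ₓ v = 0`
everywhere. -/
theorem miura_transform_solves_KdV (w : ℝ × ℝ → ℝ) (hw : ContDiff ℝ (⊤ : ℕ∞) w)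
    (hmkdv : ∀ p : ℝ × ℝ,
      pdt w p + pdx (pdx (pdx w)) p - 6 * (w p) ^ 2 * pdx w p = 0) :
    ∀ p : ℝ × ℝ,
      pdt (fun q => pdx w q + (w q) ^ 2) p
        + pdx (pdx (pdx (fun q => pdx w q + (w q) ^ 2))) p
        - 6 * (pdx w p + (w p) ^ 2) * pdx (fun q => pdx w q + (w q) ^ 2) p = 0 := by
  have hw1 := smooth_pdx hw
  have hw2 := smooth_pdx hw1
  have hw3 := smooth_pdx hw2
  have hwt := smooth_pdt hw
  have hsq : ContDiff ℝ (⊤ : ℕ∞) (fun q => (w q) ^ 2) := hw.pow 2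
  have A1 : pdx (fun q => pdx w q + (w q) ^ 2)
      = fun p => pdx (pdx w) p + 2 * (w p * pdx w p) := by
    rw [pdx_add hw1 hsq, pdx_sq hw]; funext p; dsimp only; ring
  have A2 : pdx (fun p => pdx (pdx w) p + 2 * (w p * pdx w p))
      = fun p => pdx (pdx (pdx w)) p
          + 2 * (pdx w p * pdx w p + w p * pdx (pdx w) p) := by
    rw [pdx_add hw2 (contDiff_const.mul (hw.mul hw1)), pdx_const_mul (hw.mul hw1) 2,
      pdx_mul hw hw1]
  have A3 : pdx (fun p => pdx (pdx (pdx w)) p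
        + 2 * (pdx w p * pdx w p + w p * pdx (pdx w) p))
      = fun p => pdx (pdx (pdx (pdx w))) p
          + 2 * ((pdx (pdx w) p * pdx w p + pdx w p * pdx (pdx w) p)
              + (pdx w p * pdx (pdx w) p + w p * pdx (pdx (pdx w)) p)) := by
    rw [pdx_add hw3 (contDiff_const.mul ((hw1.mul hw1).add (hw.mul hw2))),
      pdx_const_mul ((hw1.mul hw1).add (hw.mul hw2)) 2,
      pdx_add (hw1.mul hw1) (hw.mul hw2), pdx_mul hw1 hw1, pdx_mul hw hw2]
  have A4 : pdt (fun q => pdx w q + (w q) ^ 2)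
      = fun p => pdx (pdt w) p + 2 * (w p * pdt w p) := by
    rw [pdt_add hw1 hsq, pdt_sq hw, clairaut hw]; funext p; dsimp only; ring
  have hre : (fun p => pdt w p + pdx (pdx (pdx w)) p - 6 * (w p) ^ 2 * pdx w p)
      = fun p => (pdt w p + pdx (pdx (pdx w)) p) - 6 * ((w p) ^ 2 * pdx w p) := by
    funext p; ring
  have hE0 : pdx (fun p => pdt w p + pdx (pdx (pdx w)) p - 6 * (w p) ^ 2 * pdx w p)
      = fun _ => (0 : ℝ) := by
    have h0 : (fun p => pdt w p + pdx (pdx (pdx w)) p - 6 * (w p) ^ 2 * pdx w p)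
        = fun _ => (0 : ℝ) := funext hmkdv
    rw [h0]; funext p; simp [pdx]
  have A5 : pdx (fun p => (pdt w p + pdx (pdx (pdx w)) p) - 6 * ((w p) ^ 2 * pdx w p))
      = fun p => (pdx (pdt w) p + pdx (pdx (pdx (pdx w))) p)
          - 6 * ((2 * w p * pdx w p) * pdx w p + (w p) ^ 2 * pdx (pdx w) p) := by
    rw [pdx_sub (hwt.add hw3) (contDiff_const.mul (hsq.mul hw1)),
      pdx_add hwt hw3, pdx_const_mul (hsq.mul hw1) 6, pdx_mul hsq hw1, pdx_sq hw]
  intro p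
  have key : (pdx (pdt w) p + pdx (pdx (pdx (pdx w))) p)
      - 6 * ((2 * w p * pdx w p) * pdx w p + (w p) ^ 2 * pdx (pdx w) p) = 0 := by
    have h := congrFun hE0 p
    rw [hre, A5] at h
    simpa using h
  rw [A4, A1, A2, A3]
  dsimp only
  linear_combination key + 2 * w p * hmkdv p
end

section
/- Let b, r ∈ ℝ with b ≠ 0. Suppose α, α₄, β, γ : ℝ × ℝ → ℝ are smooth (C^∞) functions of (s,t) satisfying, at every point of ℝ²: (i) ∂_s β = 2αβ − 2bα₄; (ii) ∂_s γ = −2αγ + 2bα₄; (iii) ∂_s α = b(γ − β); (iv) α² + b(β + γ) = r; (v) ∂_t α = ∂_s α₄. Then α satisfies the extended mKdV equation 4b² ∂_t α = ∂_s( ∂_s² α + 2α(r − α²) ) at every point of ℝ². -/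
/-- Partial derivative in the first variable (s). -/
noncomputable def pds (u : ℝ × ℝ → ℝ) : ℝ × ℝ → ℝ :=
  fun p => deriv (fun s => u (s, p.2)) p.1

lemma diffS_aux (u : ℝ × ℝ → ℝ) (hu : ContDiff ℝ (⊤ : ℕ∞) u) (p : ℝ × ℝ) :
    DifferentiableAt ℝ (fun s => u (s, p.2)) p.1 := by
  have : (fun s => u (s, p.2)) = u ∘ (fun s => (s, p.2)) := rfl
  rw [this]
  exact (hu.differentiable (by simp) (p.1, p.2)).comp p.1
    (differentiableAt_id.prodMk (differentiableAt_const _))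

/-- From the stationary and evolutionary flow equations of the mKdV hierarchy
(i)–(iii), (v) and the orbit constraint (iv), the dynamic variable
`α = α_{2N−2}` satisfies the extended mKdV equation
`4b² ∂ₜ α = ∂ₛ( ∂ₛ² α + 2α(r − α²) )`. -/
theorem extended_mKdV_from_flows (b r : ℝ) (hb : b ≠ 0)
    (α α₄ β γ : ℝ × ℝ → ℝ)
    (hα : ContDiff ℝ (⊤ : ℕ∞) α) (hα₄ : ContDiff ℝ (⊤ : ℕ∞) α₄)
    (hβ : ContDiff ℝ (⊤ : ℕ∞) β) (hγ : ContDiff ℝ (⊤ : ℕ∞) γ)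
    (h1 : ∀ p : ℝ × ℝ, pds β p = 2 * α p * β p - 2 * b * α₄ p)
    (h2 : ∀ p : ℝ × ℝ, pds γ p = -2 * α p * γ p + 2 * b * α₄ p)
    (h3 : ∀ p : ℝ × ℝ, pds α p = b * (γ p - β p))
    (h4 : ∀ p : ℝ × ℝ, (α p) ^ 2 + b * (β p + γ p) = r)
    (h5 : ∀ p : ℝ × ℝ, pdt α p = pds α₄ p) :
    ∀ p : ℝ × ℝ,
      4 * b ^ 2 * pdt α p
        = pds (fun q => pds (pds α) q + 2 * α q * (r - (α q) ^ 2)) p := by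
  -- key: ∂ₛ² α + 2α(r − α²) = 4b²α₄ pointwise
  have hpdsα : pds α = fun q => b * (γ q - β q) := funext h3
  have key : (fun q => pds (pds α) q + 2 * α q * (r - (α q) ^ 2))
      = fun q => 4 * b ^ 2 * α₄ q := by
    funext q
    have hd2 : pds (pds α) q = b * (pds γ q - pds β q) := by
      rw [hpdsα]
      unfold pds
      have hγd := diffS_aux γ hγ q
      have hβd := diffS_aux β hβ q
      beta_reduce
      rw [deriv_const_mul _ (hγd.fun_sub hβd), deriv_fun_sub hγd hβd]
    have hc : b * (β q + γ q) = r - (α q) ^ 2 := by linarith [h4 q]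
    rw [hd2, h1 q, h2 q]
    linear_combination (-2 * α q) * hc
  rw [key]
  intro p
  rw [show pds (fun q => 4 * b ^ 2 * α₄ q) p = 4 * b ^ 2 * pds α₄ p by
    unfold pds
    exact deriv_const_mul _ (diffS_aux α₄ hα₄ p)]
  rw [h5 p]
end

section
/- Let r ∈ ℝ and let b ∈ ℂ be purely imaginary with b ≠ 0 (so that −4b² is a positive real number). Let α : ℝ × ℝ → ℂ be smooth (C^∞) with purely imaginary values, satisfying the extended mKdV equation 4b² ∂_t α = ∂_s( ∂_s² α + 2α(r − α²) ) at every point of ℝ². Then the function w(x,t) := −i · α(x + 2rt, −4b² t) is real-valued and satisfies the focusing mKdV equation ∂_t w + ∂_x^3 w + 6 w^2 ∂_x w = 0 at every point of ℝ². -/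
/-- Partial derivative in the first variable (s, resp. x), complex-valued. -/
noncomputable def pdxC (u : ℝ × ℝ → ℂ) : ℝ × ℝ → ℂ :=
  fun p => deriv (fun x => u (x, p.2)) p.1

/-- Partial derivative in the second variable (t), complex-valued. -/
noncomputable def pdtC (u : ℝ × ℝ → ℂ) : ℝ × ℝ → ℂ :=
  fun p => deriv (fun t => u (p.1, t)) p.2

lemma hasDerivAt_sliceX (u : ℝ × ℝ → ℂ) (x t : ℝ)
    (hu : DifferentiableAt ℝ u (x, t)) :
    HasDerivAt (fun s => u (s, t)) (fderiv ℝ u (x, t) (1, 0)) x := by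
  have hline : HasDerivAt (fun s : ℝ => ((s, t) : ℝ × ℝ)) ((1, 0) : ℝ × ℝ) x :=
    (hasDerivAt_id x).prodMk (hasDerivAt_const x t)
  simpa [Function.comp_def] using hu.hasFDerivAt.comp_hasDerivAt x hline

lemma hasDerivAt_sliceT (u : ℝ × ℝ → ℂ) (x t : ℝ)
    (hu : DifferentiableAt ℝ u (x, t)) :
    HasDerivAt (fun s => u (x, s)) (fderiv ℝ u (x, t) (0, 1)) t := by
  have hline : HasDerivAt (fun s : ℝ => ((x, s) : ℝ × ℝ)) ((0, 1) : ℝ × ℝ) t :=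
    (hasDerivAt_const t x).prodMk (hasDerivAt_id t)
  simpa [Function.comp_def] using hu.hasFDerivAt.comp_hasDerivAt t hline

lemma pdx_eq (u : ℝ × ℝ → ℂ) (p : ℝ × ℝ) (hu : DifferentiableAt ℝ u p) :
    pdxC u p = fderiv ℝ u p (1, 0) := by
  obtain ⟨x, t⟩ := p
  simpa [pdxC] using (hasDerivAt_sliceX u x t hu).deriv

lemma pdt_eq (u : ℝ × ℝ → ℂ) (p : ℝ × ℝ) (hu : DifferentiableAt ℝ u p) :
    pdtC u p = fderiv ℝ u p (0, 1) := by
  obtain ⟨x, t⟩ := p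
  simpa [pdtC] using (hasDerivAt_sliceT u x t hu).deriv

lemma contDiff_pdxC (u : ℝ × ℝ → ℂ) (hu : ContDiff ℝ (⊤ : ℕ∞) u) : ContDiff ℝ (⊤ : ℕ∞) (pdxC u) := by
  have h : pdxC u = fun q => fderiv ℝ u q (1, 0) :=
    funext fun q => pdx_eq u q (hu.differentiable (by simp) q)
  rw [h]
  exact (hu.fderiv_right (by simp)).clm_apply contDiff_const

lemma hasDerivAt_compX (u : ℝ × ℝ → ℂ) (a t x : ℝ)
    (hu : DifferentiableAt ℝ u (x + a, t)) :
    HasDerivAt (fun s => u (s + a, t)) (fderiv ℝ u (x + a, t) (1, 0)) x := by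
  have hline : HasDerivAt (fun s : ℝ => ((s + a, t) : ℝ × ℝ)) ((1, 0) : ℝ × ℝ) x :=
    ((hasDerivAt_id x).add_const a).prodMk (hasDerivAt_const x t)
  simpa [Function.comp_def] using hu.hasFDerivAt.comp_hasDerivAt x hline

lemma hasDerivAt_compT (u : ℝ × ℝ → ℂ) (r c x t : ℝ)
    (hu : DifferentiableAt ℝ u (x + 2 * r * t, c * t)) :
    HasDerivAt (fun s => u (x + 2 * r * s, c * s))
      (fderiv ℝ u (x + 2 * r * t, c * t) (2 * r, c)) t := by
  have h1 : HasDerivAt (fun s : ℝ => x + 2 * r * s) (2 * r) t := by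
    simpa using ((hasDerivAt_id t).const_mul (2 * r)).const_add x
  have h2 : HasDerivAt (fun s : ℝ => c * s) c t := by
    simpa using (hasDerivAt_id t).const_mul c
  have hline := h1.prodMk h2
  simpa [Function.comp_def] using hu.hasFDerivAt.comp_hasDerivAt t hline

lemma step_pdx (r c : ℝ) (u : ℝ × ℝ → ℂ) (hu : ContDiff ℝ (⊤ : ℕ∞) u) :
    pdxC (fun q : ℝ × ℝ => -Complex.I * u (q.1 + 2 * r * q.2, c * q.2))
      = fun q : ℝ × ℝ => -Complex.I * pdxC u (q.1 + 2 * r * q.2, c * q.2) := by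
  funext q
  have hd := hasDerivAt_compX u (2 * r * q.2) (c * q.2) q.1
    (hu.differentiable (by simp) _)
  have h2 := (hd.const_mul (-Complex.I)).deriv
  rw [pdx_eq u _ (hu.differentiable (by simp) _)]
  simpa [pdxC] using h2


/-- Let `b` be purely imaginary and nonzero (so `−4b²` is a positive real),
and let `α` be smooth with purely imaginary values satisfying the extended
mKdV equation `4b² ∂ₜ α = ∂ₛ( ∂ₛ² α + 2α(r − α²) )`.  Then
`w(x,t) := −i·α(x + 2rt, −4b²t)` is real-valued and satisfies the focusing
mKdV equation `∂ₜ w + ∂ₓ³ w + 6 w² ∂ₓ w = 0`. -/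
theorem focusing_mKdV_from_extended (r : ℝ) (b : ℂ) (hbre : b.re = 0) (hb : b ≠ 0)
    (α : ℝ × ℝ → ℂ) (hα : ContDiff ℝ (⊤ : ℕ∞) α)
    (hαim : ∀ p : ℝ × ℝ, (α p).re = 0)
    (hext : ∀ p : ℝ × ℝ,
      4 * b ^ 2 * pdtC α p
        = pdxC (fun q => pdxC (pdxC α) q + 2 * α q * ((r : ℂ) - (α q) ^ 2)) p) :
    ∀ p : ℝ × ℝ,
      ((-Complex.I * α (p.1 + 2 * r * p.2, (-4 * b ^ 2).re * p.2)).im = 0) ∧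
      pdtC (fun q => -Complex.I * α (q.1 + 2 * r * q.2, (-4 * b ^ 2).re * q.2)) p
        + pdxC (pdxC (pdxC (fun q =>
            -Complex.I * α (q.1 + 2 * r * q.2, (-4 * b ^ 2).re * q.2)))) p
        + 6 * (-Complex.I * α (p.1 + 2 * r * p.2, (-4 * b ^ 2).re * p.2)) ^ 2
            * pdxC (fun q =>
                -Complex.I * α (q.1 + 2 * r * q.2, (-4 * b ^ 2).re * q.2)) p = 0 := by
  intro p
  set c : ℝ := (-4 * b ^ 2).re with hcdef
  have hbsq : (b ^ 2).im = 0 := by rw [sq, Complex.mul_im, hbre]; ring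
  have hc : ((c : ℝ) : ℂ) = -4 * b ^ 2 := by
    apply Complex.ext
    · simp [hcdef]
    · simp [Complex.mul_im, hbsq]
  constructor
  · simp [Complex.mul_im, hαim]
  · set X : ℝ := p.1 + 2 * r * p.2 with hX
    set T : ℝ := c * p.2 with hT'
    have hα1 : ContDiff ℝ (⊤ : ℕ∞) (pdxC α) := contDiff_pdxC α hα
    have hα2 : ContDiff ℝ (⊤ : ℕ∞) (pdxC (pdxC α)) := contDiff_pdxC _ hα1
    -- spatial derivatives of w
    rw [step_pdx r c α hα, step_pdx r c (pdxC α) hα1, step_pdx r c (pdxC (pdxC α)) hα2]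
    -- time derivative of w
    have hdT := hasDerivAt_compT α r c p.1 p.2 (hα.differentiable (by simp) (X, T))
    have hT : pdtC (fun q : ℝ × ℝ => -Complex.I * α (q.1 + 2 * r * q.2, c * q.2)) p
        = -Complex.I * fderiv ℝ α (X, T) (2 * r, c) := by
      simpa [pdtC] using (hdT.const_mul (-Complex.I)).deriv
    rw [hT]
    -- linearity of the fderiv
    have hvec : ((2 * r, c) : ℝ × ℝ) = (2 * r) • ((1, 0) : ℝ × ℝ) + c • ((0, 1) : ℝ × ℝ) := by
      simp [Prod.ext_iff]
    have hlin : fderiv ℝ α (X, T) (2 * r, c)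
        = (2 * r : ℝ) • fderiv ℝ α (X, T) (1, 0) + (c : ℝ) • fderiv ℝ α (X, T) (0, 1) := by
      rw [hvec, map_add, map_smul, map_smul]
    rw [hlin, ← pdx_eq α (X, T) (hα.differentiable (by simp) _),
      ← pdt_eq α (X, T) (hα.differentiable (by simp) _)]
    -- expand the extended mKdV equation at (X, T)
    have hdA2 : HasDerivAt (fun x => pdxC (pdxC α) (x, T)) (pdxC (pdxC (pdxC α)) (X, T)) X := by
      rw [pdx_eq (pdxC (pdxC α)) (X, T) (hα2.differentiable (by simp) _)]
      exact hasDerivAt_sliceX (pdxC (pdxC α)) X T (hα2.differentiable (by simp) _)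
    have hdα : HasDerivAt (fun x => α (x, T)) (pdxC α (X, T)) X := by
      rw [pdx_eq α (X, T) (hα.differentiable (by simp) _)]
      exact hasDerivAt_sliceX α X T (hα.differentiable (by simp) _)
    have hsq : HasDerivAt (fun x => α (x, T) ^ 2)
        (pdxC α (X, T) * α (X, T) + α (X, T) * pdxC α (X, T)) X := by
      simpa [pow_two, Pi.mul_def] using hdα.mul hdα
    have hg : HasDerivAt (fun x => 2 * α (x, T) * ((r : ℂ) - α (x, T) ^ 2))
        (2 * pdxC α (X, T) * ((r : ℂ) - α (X, T) ^ 2)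
          + 2 * α (X, T) * (-(pdxC α (X, T) * α (X, T) + α (X, T) * pdxC α (X, T)))) X :=
      (hdα.const_mul 2).mul (hsq.const_sub (r : ℂ))
    have hE := hext (X, T)
    rw [show pdxC (fun q => pdxC (pdxC α) q + 2 * α q * ((r : ℂ) - α q ^ 2)) (X, T)
        = pdxC (pdxC (pdxC α)) (X, T)
          + (2 * pdxC α (X, T) * ((r : ℂ) - α (X, T) ^ 2)
            + 2 * α (X, T) * (-(pdxC α (X, T) * α (X, T) + α (X, T) * pdxC α (X, T))))
      from by simpa [pdxC, Pi.add_def] using (hdA2.add hg).deriv] at hE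
    simp only [Complex.real_smul, Complex.ofReal_mul, Complex.ofReal_ofNat, ← hX, ← hT']
    linear_combination (-Complex.I * pdtC α (X, T)) * hc + Complex.I * hE
      + (-6 * Complex.I * pdxC α (X, T) * α (X, T) ^ 2) * Complex.I_sq
end

section
/- Let b, r₀ ∈ ℝ with b ≠ 0, and let α, β, γ : ℝ → ℝ be differentiable functions satisfying at every s ∈ ℝ: β' = 2αβ, γ' = −2αγ, α' = b(γ − β), and α² + b(γ + β) = r₀. Then α is twice differentiable and satisfies α'' = −2α(r₀ − α²) at every point. -/
theorem one_gap_stationary_ODE_general (b r₀ : ℝ)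
    (α β γ : ℝ → ℝ)
    (hβ : Differentiable ℝ β) (hγ : Differentiable ℝ γ)
    (h1 : ∀ s : ℝ, deriv β s = 2 * α s * β s)
    (h2 : ∀ s : ℝ, deriv γ s = -2 * α s * γ s)
    (h3 : ∀ s : ℝ, deriv α s = b * (γ s - β s))
    (h4 : ∀ s : ℝ, (α s) ^ 2 + b * (γ s + β s) = r₀) :
    Differentiable ℝ (deriv α) ∧
    ∀ s : ℝ, deriv (deriv α) s = -2 * α s * (r₀ - (α s) ^ 2) := by
  have hα' : deriv α = fun s => b * (γ s - β s) := funext h3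
  have hα'' : ∀ s, HasDerivAt (deriv α) (b * (deriv γ s - deriv β s)) s := fun s =>
    hα' ▸ ((hγ s).hasDerivAt.sub (hβ s).hasDerivAt).const_mul b
  refine ⟨fun s => (hα'' s).differentiableAt, fun s => ?_⟩
  rw [(hα'' s).deriv, h1, h2]
  -- b(γ' − β') = −2α · b(γ + β), and the orbit constraint gives b(γ + β) = r₀ − α².
  linear_combination (-2 * α s) * h4 s

/-- The one-gap (N = 1) stationary flow of the mKdV hierarchy
`β' = 2αβ`, `γ' = −2αγ`, `α' = b(γ − β)` together with the orbit constraint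
`α² + b(γ + β) = r₀` implies that `α` is twice differentiable with
`α'' = −2α(r₀ − α²)`. -/
theorem one_gap_stationary_ODE (b r₀ : ℝ) (hb : b ≠ 0)
    (α β γ : ℝ → ℝ)
    (hα : Differentiable ℝ α) (hβ : Differentiable ℝ β) (hγ : Differentiable ℝ γ)
    (h1 : ∀ s : ℝ, deriv β s = 2 * α s * β s)
    (h2 : ∀ s : ℝ, deriv γ s = -2 * α s * γ s)
    (h3 : ∀ s : ℝ, deriv α s = b * (γ s - β s))
    (h4 : ∀ s : ℝ, (α s) ^ 2 + b * (γ s + β s) = r₀) :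
    Differentiable ℝ (deriv α) ∧
    ∀ s : ℝ, deriv (deriv α) s = -2 * α s * (r₀ - (α s) ^ 2) :=
  one_gap_stationary_ODE_general b r₀ α β γ hβ hγ h1 h2 h3 h4
end

section
/- Let b ∈ ℝ and let α, α₄, β, γ : ℝ × ℝ → ℝ be differentiable functions of (s,t). For z ∈ ℝ define the 2×2 real matrices A_st(z) := −[[α, b],[b z, −α]] and A_ev(z) := z · A_st(z) − [[α₄, β],[γ z, −α₄]] (entrywise functions of (s,t)). Then the zero curvature equation ∂_t A_st(z) − ∂_s A_ev(z) = A_st(z) · A_ev(z) − A_ev(z) · A_st(z) holds at every (s,t) ∈ ℝ² for every z ∈ ℝ if and only if the following four equations hold at every (s,t): ∂_s α = b(γ − β), ∂_t α = ∂_s α₄, ∂_s β = 2αβ − 2bα₄, and ∂_s γ = −2αγ + 2bα₄. -/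
/-- Entrywise partial derivative in the first variable of a matrix-valued map. -/
noncomputable def pdsM (A : ℝ × ℝ → Matrix (Fin 2) (Fin 2) ℝ) :
    ℝ × ℝ → Matrix (Fin 2) (Fin 2) ℝ :=
  fun p => Matrix.of fun i j => deriv (fun s => A (s, p.2) i j) p.1

/-- Entrywise partial derivative in the second variable of a matrix-valued map. -/
noncomputable def pdtM (A : ℝ × ℝ → Matrix (Fin 2) (Fin 2) ℝ) :
    ℝ × ℝ → Matrix (Fin 2) (Fin 2) ℝ :=
  fun p => Matrix.of fun i j => deriv (fun t => A (p.1, t) i j) p.2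

/-- The stationary Lax connection matrix `A_st(z) = −[[α, b],[bz, −α]]`. -/
def Ast (b : ℝ) (α : ℝ × ℝ → ℝ) (z : ℝ) (p : ℝ × ℝ) : Matrix (Fin 2) (Fin 2) ℝ :=
  - !![α p, b; b * z, -(α p)]

/-- The evolutionary Lax connection matrix
`A_ev(z) = z·A_st(z) − [[α₄, β],[γz, −α₄]]`. -/
def Aev (b : ℝ) (α α₄ β γ : ℝ × ℝ → ℝ) (z : ℝ) (p : ℝ × ℝ) :
    Matrix (Fin 2) (Fin 2) ℝ :=
  z • Ast b α z p - !![α₄ p, β p; γ p * z, -(α₄ p)]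

/-! Entrywise, both sides of the zero curvature equation are affine in `z`: since `A_st` commutes
with itself, the commutator is `[[α, b], [bz, -α]]` bracketed with `[[α₄, β], [γz, -α₄]]`. The
constant and linear coefficients (read off at `z = 0` and `z = 1`) are the four flow equations. -/

theorem hasDerivAt_pds {u : ℝ × ℝ → ℝ} {p : ℝ × ℝ} (hu : DifferentiableAt ℝ u p) :
    HasDerivAt (fun s => u (s, p.2)) (pds u p) p.1 :=
  (hu.comp _ (differentiableAt_id.prodMk (differentiableAt_const _))).hasDerivAt

theorem pdtM_Ast (b : ℝ) (α : ℝ × ℝ → ℝ) (z : ℝ) (p : ℝ × ℝ) :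
    pdtM (fun q => Ast b α z q) p = !![-pdt α p, 0; 0, pdt α p] := by
  ext i j
  fin_cases i <;> fin_cases j <;> simp [pdtM, Ast, pdt, deriv.fun_neg]

theorem pdsM_Aev (b : ℝ) {α α₄ : ℝ × ℝ → ℝ} (β γ : ℝ × ℝ → ℝ) (z : ℝ) {p : ℝ × ℝ}
    (hα : DifferentiableAt ℝ α p) (hα₄ : DifferentiableAt ℝ α₄ p) :
    pdsM (fun q => Aev b α α₄ β γ z q) p =
      !![-(z * pds α p) - pds α₄ p, -pds β p; -(pds γ p * z), z * pds α p + pds α₄ p] := by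
  have hα' := hasDerivAt_pds hα
  have hα₄' := hasDerivAt_pds hα₄
  ext i j
  fin_cases i <;> fin_cases j <;> simp [pdsM, Aev, Ast, pds]
  · exact ((hα'.const_mul z).neg.sub hα₄').deriv
  · exact ((hα'.const_mul z).add hα₄').deriv

theorem Ast_mul_Aev_sub_Aev_mul_Ast (b : ℝ) (α α₄ β γ : ℝ × ℝ → ℝ) (z : ℝ) (p : ℝ × ℝ) :
    Ast b α z p * Aev b α α₄ β γ z p - Aev b α α₄ β γ z p * Ast b α z p =
      !![b * z * (γ p - β p), 2 * α p * β p - 2 * b * α₄ p;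
        z * (2 * b * α₄ p - 2 * α p * γ p), b * z * (β p - γ p)] := by
  ext i j
  fin_cases i <;> fin_cases j <;> simp [Ast, Aev] <;> ring

theorem zero_curvature_at_iff (b : ℝ) {α α₄ : ℝ × ℝ → ℝ} (β γ : ℝ × ℝ → ℝ) (z : ℝ)
    {p : ℝ × ℝ} (hα : DifferentiableAt ℝ α p) (hα₄ : DifferentiableAt ℝ α₄ p) :
    pdtM (fun q => Ast b α z q) p - pdsM (fun q => Aev b α α₄ β γ z q) p
        = Ast b α z p * Aev b α α₄ β γ z p - Aev b α α₄ β γ z p * Ast b α z p ↔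
      z * (pds α p - b * (γ p - β p)) + (pds α₄ p - pdt α p) = 0 ∧
      pds β p = 2 * α p * β p - 2 * b * α₄ p ∧
      z * (pds γ p + 2 * α p * γ p - 2 * b * α₄ p) = 0 := by
  rw [pdtM_Ast, pdsM_Aev b β γ z hα hα₄, Ast_mul_Aev_sub_Aev_mul_Ast, ← Matrix.ext_iff]
  simp only [Fin.forall_fin_two, Matrix.sub_apply, Matrix.of_apply, Matrix.cons_val',
    Matrix.cons_val_zero, Matrix.cons_val_one, Matrix.empty_val', Matrix.cons_val_fin_one]
  constructor
  · rintro ⟨⟨h00, h01⟩, h10, -⟩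
    exact ⟨by linear_combination h00, by linear_combination h01, by linear_combination h10⟩
  · rintro ⟨hdiag, hβ, hγ⟩
    exact ⟨⟨by linear_combination hdiag, by linear_combination hβ⟩,
      by linear_combination hγ, by linear_combination -hdiag⟩

theorem zero_curvature_iff_flows_general (b : ℝ) (α α₄ β γ : ℝ × ℝ → ℝ)
    (hα : Differentiable ℝ α) (hα₄ : Differentiable ℝ α₄) :
    (∀ z : ℝ, ∀ p : ℝ × ℝ,
        pdtM (fun q => Ast b α z q) p - pdsM (fun q => Aev b α α₄ β γ z q) p
          = Ast b α z p * Aev b α α₄ β γ z p - Aev b α α₄ β γ z p * Ast b α z p)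
    ↔ ((∀ p : ℝ × ℝ, pds α p = b * (γ p - β p)) ∧
       (∀ p : ℝ × ℝ, pdt α p = pds α₄ p) ∧
       (∀ p : ℝ × ℝ, pds β p = 2 * α p * β p - 2 * b * α₄ p) ∧
       (∀ p : ℝ × ℝ, pds γ p = -2 * α p * γ p + 2 * b * α₄ p)) := by
  simp only [fun z p => zero_curvature_at_iff b β γ z (hα p) (hα₄ p)]
  constructor
  · intro H
    refine ⟨fun p => ?_, fun p => ?_, fun p => (H 0 p).2.1, fun p => ?_⟩
    · linear_combination (H 1 p).1 - (H 0 p).1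
    · linear_combination -(H 0 p).1
    · linear_combination (H 1 p).2.2
  · rintro ⟨hα', hα₄', hβ, hγ⟩ z p
    exact ⟨by linear_combination z * hα' p - hα₄' p, hβ p, by linear_combination z * hγ p⟩

/-- Zero curvature representation of the mKdV flows: the equation
`∂ₜ A_st(z) − ∂ₛ A_ev(z) = [A_st(z), A_ev(z)]` holds for all `z` and `(s,t)`
iff the four flow equations for `α, α₄, β, γ` hold. -/
theorem zero_curvature_iff_flows (b : ℝ) (α α₄ β γ : ℝ × ℝ → ℝ)
    (hα : Differentiable ℝ α) (hα₄ : Differentiable ℝ α₄)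
    (hβ : Differentiable ℝ β) (hγ : Differentiable ℝ γ) :
    (∀ z : ℝ, ∀ p : ℝ × ℝ,
        pdtM (fun q => Ast b α z q) p - pdsM (fun q => Aev b α α₄ β γ z q) p
          = Ast b α z p * Aev b α α₄ β γ z p - Aev b α α₄ β γ z p * Ast b α z p)
    ↔ ((∀ p : ℝ × ℝ, pds α p = b * (γ p - β p)) ∧
       (∀ p : ℝ × ℝ, pdt α p = pds α₄ p) ∧
       (∀ p : ℝ × ℝ, pds β p = 2 * α p * β p - 2 * b * α₄ p) ∧
       (∀ p : ℝ × ℝ, pds γ p = -2 * α p * γ p + 2 * b * α₄ p)) :=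
  zero_curvature_iff_flows_general b α α₄ β γ hα hα₄
end

section
/- Let K be a field, N ≥ 1 an integer, and z₁, …, z_N pairwise distinct elements of K. Then for every integer n with 1 ≤ n ≤ N, the sum ∑_{k=1}^{N} ( z_k^{N−n} · ∑_{j≠k} z_j ) / ∏_{j≠k} (z_k − z_j) equals −1 if n = 2, and equals 0 for all other n with 1 ≤ n ≤ N. -/
/-!
Write `A m = ∑ₖ zₖ^m / ∏_{j≠k} (zₖ - zⱼ)`. By Lagrange interpolation, `A m` is the coefficient
of `X^{N-1}` of any polynomial of degree `< N` taking the values `zₖ^m` at the nodes. So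
`A m = δ_{m, N-1}` for `m < N` (take `X^m`), and `A N = ∑ zⱼ` (take `X^N - ∏ⱼ (X - zⱼ)`).
Since `∑_{j≠k} zⱼ = S - zₖ` with `S = ∑ zⱼ`, the sum in question is `S · A (N-n) - A (N-n+1)`.
-/

open Finset Polynomial Lagrange

section

variable {F ι : Type*} [Field F] [DecidableEq ι] {s : Finset ι} {v : ι → F}

theorem Lagrange.sum_pow_div_prod_sub_of_lt (hvs : Set.InjOn v s) {m : ℕ} (hm : m < #s) :
    ∑ i ∈ s, v i ^ m / ∏ j ∈ s.erase i, (v i - v j) = if m = #s - 1 then 1 else 0 := by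
  have hdeg : (X ^ m : F[X]).degree < #s := by
    rw [degree_X_pow]; exact_mod_cast hm
  simpa [coeff_X_pow, eq_comm] using (coeff_eq_sum hvs hdeg).symm

theorem Lagrange.sum_pow_card_div_prod_sub (hvs : Set.InjOn v s) :
    ∑ i ∈ s, v i ^ #s / ∏ j ∈ s.erase i, (v i - v j) = ∑ i ∈ s, v i := by
  rcases s.eq_empty_or_nonempty with rfl | hs
  · simp
  have hdeg : (X ^ #s - nodal s v : F[X]).degree < (#s : ℕ) := by
    have := degree_sub_lt_left (p := (X ^ #s : F[X])) (q := nodal s v)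
      (by rw [degree_X_pow, degree_nodal]) (pow_ne_zero _ X_ne_zero)
      (by rw [(monic_X_pow _).leadingCoeff, nodal_monic.leadingCoeff])
    rwa [degree_X_pow] at this
  calc ∑ i ∈ s, v i ^ #s / ∏ j ∈ s.erase i, (v i - v j)
      = ∑ i ∈ s, (X ^ #s - nodal s v).eval (v i) / ∏ j ∈ s.erase i, (v i - v j) :=
        sum_congr rfl fun i hi ↦ by
          rw [eval_sub, eval_nodal_at_node hi, sub_zero, eval_pow, eval_X]
    _ = (X ^ #s - nodal s v).coeff (#s - 1) := (coeff_eq_sum hvs hdeg).symm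
    _ = ∑ i ∈ s, v i := by
        rw [coeff_sub, coeff_X_pow, if_neg (by have := hs.card_pos; omega), nodal_eq,
          prod_X_sub_C_coeff_card_pred s v hs.card_pos, zero_sub, neg_neg]

theorem Lagrange.sum_pow_mul_sum_erase_div_prod_sub (hvs : Set.InjOn v s) {n : ℕ} (hn1 : 1 ≤ n)
    (hn2 : n ≤ #s) :
    ∑ i ∈ s, (v i ^ (#s - n) * ∑ j ∈ s.erase i, v j) / ∏ j ∈ s.erase i, (v i - v j)
      = if n = 2 then -1 else 0 := by
  have hsplit : ∀ m, ∑ i ∈ s, (v i ^ m * ∑ j ∈ s.erase i, v j) / ∏ j ∈ s.erase i, (v i - v j)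
      = (∑ j ∈ s, v j) * ∑ i ∈ s, v i ^ m / ∏ j ∈ s.erase i, (v i - v j)
        - ∑ i ∈ s, v i ^ (m + 1) / ∏ j ∈ s.erase i, (v i - v j) := fun m ↦ by
    rw [mul_sum, ← sum_sub_distrib]
    refine sum_congr rfl fun i hi ↦ ?_
    rw [sum_erase_eq_sub hi]
    ring
  rw [hsplit]
  obtain rfl | rfl | hn3 : n = 1 ∨ n = 2 ∨ 3 ≤ n := by omega
  · rw [sum_pow_div_prod_sub_of_lt hvs (by omega), Nat.sub_add_cancel hn2,
      sum_pow_card_div_prod_sub hvs]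
    simp
  · rw [sum_pow_div_prod_sub_of_lt hvs (by omega), sum_pow_div_prod_sub_of_lt hvs (by omega)]
    simp [show #s - 2 ≠ #s - 1 by omega, show #s - 2 + 1 = #s - 1 by omega]
  · rw [sum_pow_div_prod_sub_of_lt hvs (by omega), sum_pow_div_prod_sub_of_lt hvs (by omega)]
    simp [show #s - n ≠ #s - 1 by omega, show #s - n + 1 ≠ #s - 1 by omega, show n ≠ 2 by omega]

end

theorem lagrange_sum_power_weighted_general (K : Type*) [Field K] (N : ℕ)
    (z : Fin N → K) (hz : Function.Injective z)
    (n : ℕ) (hn1 : 1 ≤ n) (hn2 : n ≤ N) :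
    ∑ k : Fin N,
        (z k ^ (N - n) * ∑ j ∈ Finset.univ.erase k, z j)
          / ∏ j ∈ Finset.univ.erase k, (z k - z j)
      = if n = 2 then -1 else 0 := by
  simpa using sum_pow_mul_sum_erase_div_prod_sub (s := univ) hz.injOn hn1 (by simpa using hn2)

/-- Lagrange interpolation identity: for pairwise distinct `z₁, …, z_N` in a
field and `1 ≤ n ≤ N`, the sum
`∑ₖ (zₖ^{N−n} · ∑_{j≠k} zⱼ) / ∏_{j≠k}(zₖ − zⱼ)` equals `−1` if `n = 2` and `0`
for all other `n` with `1 ≤ n ≤ N`. -/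
theorem lagrange_sum_power_weighted (K : Type*) [Field K] (N : ℕ) (hN : 1 ≤ N)
    (z : Fin N → K) (hz : Function.Injective z)
    (n : ℕ) (hn1 : 1 ≤ n) (hn2 : n ≤ N) :
    ∑ k : Fin N,
        (z k ^ (N - n) * ∑ j ∈ Finset.univ.erase k, z j)
          / ∏ j ∈ Finset.univ.erase k, (z k - z j)
      = if n = 2 then -1 else 0 :=
  lagrange_sum_power_weighted_general K N z hz n hn1 hn2
end

section
/- Let N ≥ 1 be an integer and b ∈ ℝ with b ≠ 0. Let z₁, …, z_N : ℝ → ℝ be differentiable functions such that z₁(s), …, z_N(s) are pairwise distinct for every s ∈ ℝ, let A : ℝ → ℝ and α : ℝ × ℝ → ℝ be arbitrary functions, and define γ(z, s) := b · ∏_{k=1}^{N} (z − z_k(s)). If for every z ∈ ℝ and every s ∈ ℝ one has ∂_s γ(z,s) = −2 A(s) γ(z,s) + 2 b z α(z, s), then for every k ∈ {1,…,N} and every s ∈ ℝ, z_k'(s) = −2 w_k(s) / ∏_{j≠k} ( z_k(s) − z_j(s) ), where w_k(s) := z_k(s) · α(z_k(s), s). -/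
/-!
At a zero `zₖ(s)` of `γ(·, s)` the flow equation loses its `γ` term, and the `s`-derivative of
`∏ⱼ (zₖ(s) − zⱼ(s'))` at `s' = s` only sees the factor that vanishes there, giving
`−b zₖ' ∏_{j≠k} (zₖ − zⱼ) = 2 b zₖ α(zₖ, s)`. The product is nonzero since the zeros are distinct.
-/

open Finset

section

variable {𝕜 : Type*} [NontriviallyNormedField 𝕜] {𝔸 : Type*} [NormedCommRing 𝔸]
  [NormedAlgebra 𝕜 𝔸] {ι : Type*} [DecidableEq ι]

theorem HasDerivAt.finsetProd_of_apply_eq_zero {u : Finset ι} {f : ι → 𝕜 → 𝔸} {f' : ι → 𝔸}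
    {x : 𝕜} (hf : ∀ i ∈ u, HasDerivAt (f i) (f' i) x) {k : ι} (hk : k ∈ u) (hfk : f k x = 0) :
    HasDerivAt (∏ i ∈ u, f i ·) ((∏ j ∈ u.erase k, f j x) * f' k) x := by
  convert HasDerivAt.fun_finsetProd hf using 1
  rw [sum_eq_single_of_mem k hk fun i _ hik => ?_, smul_eq_mul]
  rw [prod_eq_zero (mem_erase.2 ⟨hik.symm, hk⟩) hfk, zero_smul]

end

theorem prod_erase_sub_ne_zero_of_injective {R ι : Type*} [CommRing R] [IsDomain R]
    [Fintype ι] [DecidableEq ι] {v : ι → R} (hv : Function.Injective v) (k : ι) :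
    ∏ j ∈ univ.erase k, (v k - v j) ≠ 0 :=
  prod_ne_zero_iff.2 fun _ hj => sub_ne_zero.2 <| hv.ne (mem_erase.1 hj).1.symm

theorem separation_variables_stationary_flow_general (N : ℕ)
    (b : ℝ) (hb : b ≠ 0)
    (zf : Fin N → ℝ → ℝ) (hdiff : ∀ k, Differentiable ℝ (zf k))
    (hdistinct : ∀ s : ℝ, Function.Injective fun k => zf k s)
    (A : ℝ → ℝ) (α : ℝ × ℝ → ℝ)
    (hflow : ∀ z s : ℝ,
      deriv (fun s' => b * ∏ k : Fin N, (z - zf k s')) s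
        = -2 * A s * (b * ∏ k : Fin N, (z - zf k s)) + 2 * b * z * α (z, s)) :
    ∀ (k : Fin N) (s : ℝ),
      deriv (zf k) s
        = -2 * (zf k s * α (zf k s, s))
            / ∏ j ∈ Finset.univ.erase k, (zf k s - zf j s) := by
  intro k s
  have hprod : HasDerivAt (fun s' => ∏ j, (zf k s - zf j s'))
      ((∏ j ∈ univ.erase k, (zf k s - zf j s)) * -deriv (zf k) s) s :=
    .finsetProd_of_apply_eq_zero (fun j _ => (hdiff j s).hasDerivAt.const_sub _) (mem_univ k)
      (sub_self _)
  have h := hflow (zf k s) s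
  rw [deriv_const_mul_field, hprod.deriv, prod_eq_zero (mem_univ k) (sub_self _)] at h
  rw [eq_div_iff (prod_erase_sub_ne_zero_of_injective (hdistinct s) k)]
  refine mul_left_cancel₀ hb ?_
  linear_combination -h

/-- Equations of motion for the separation variables under the stationary flow:
if `γ(z,s) = b ∏ₖ (z − zₖ(s))` satisfies
`∂ₛ γ(z,s) = −2 A(s) γ(z,s) + 2 b z α(z,s)` for all `z, s`, then each zero
`zₖ` obeys `zₖ' = −2 wₖ / ∏_{j≠k}(zₖ − zⱼ)` with `wₖ = zₖ α(zₖ, s)`. -/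
theorem separation_variables_stationary_flow (N : ℕ) (hN : 1 ≤ N)
    (b : ℝ) (hb : b ≠ 0)
    (zf : Fin N → ℝ → ℝ) (hdiff : ∀ k, Differentiable ℝ (zf k))
    (hdistinct : ∀ s : ℝ, Function.Injective fun k => zf k s)
    (A : ℝ → ℝ) (α : ℝ × ℝ → ℝ)
    (hflow : ∀ z s : ℝ,
      deriv (fun s' => b * ∏ k : Fin N, (z - zf k s')) s
        = -2 * A s * (b * ∏ k : Fin N, (z - zf k s)) + 2 * b * z * α (z, s)) :
    ∀ (k : Fin N) (s : ℝ),
      deriv (zf k) s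
        = -2 * (zf k s * α (zf k s, s))
            / ∏ j ∈ Finset.univ.erase k, (zf k s - zf j s) :=
  separation_variables_stationary_flow_general N b hb zf hdiff hdistinct A α hflow
end

section
/- Let N ≥ 1 be an integer and b ∈ ℝ with b ≠ 0. Let z₁, …, z_N : ℝ → ℝ be differentiable functions such that z₁(t), …, z_N(t) are pairwise distinct for every t ∈ ℝ, let A, A₄ : ℝ → ℝ and α : ℝ × ℝ → ℝ be arbitrary functions, define γ(z, t) := b · ∏_{k=1}^{N} (z − z_k(t)) and c(t) := −b · ∑_{j=1}^{N} z_j(t). If for every z ∈ ℝ and every t ∈ ℝ one has ∂_t γ(z,t) = −2 (A(t) z + A₄(t)) γ(z,t) + 2 (b z² + c(t) z) α(z, t), then for every k ∈ {1,…,N} and every t ∈ ℝ, z_k'(t) = 2 w_k(t) · ( ∑_{j≠k} z_j(t) ) / ∏_{j≠k} ( z_k(t) − z_j(t) ), where w_k(t) := z_k(t) · α(z_k(t), t). -/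
/-!
Evaluate the flow equation at the moving zero `z = zₖ(t)`. There `γ` vanishes, and in the
product rule for `∂ₜ γ` only the term differentiating the factor `z − zₖ` survives, so
`∂ₜ γ(zₖ, t) = −b zₖ' ∏_{j≠k} (zₖ − zⱼ)`. Since `b zₖ² + c zₖ = −b zₖ ∑_{j≠k} zⱼ`, cancelling
`b` and dividing by the product, nonzero because the zeros are distinct, gives the formula.
-/

open Finset

theorem HasDerivAt.prod_sub_at_root {𝕜 ι : Type*} [NontriviallyNormedField 𝕜] [DecidableEq ι]
    {s : Finset ι} {f : ι → 𝕜 → 𝕜} {f' : ι → 𝕜} {t : 𝕜}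
    (hf : ∀ i ∈ s, HasDerivAt (f i) (f' i) t) {k : ι} (hk : k ∈ s) :
    HasDerivAt (fun t' => ∏ i ∈ s, (f k t - f i t'))
      (-f' k * ∏ i ∈ s.erase k, (f k t - f i t)) t := by
  refine (HasDerivAt.fun_finsetProd fun i hi => (hf i hi).const_sub (f k t)).congr_deriv ?_
  rw [sum_eq_single_of_mem k hk, smul_eq_mul, mul_comm]
  intro i _ hik
  rw [prod_eq_zero (mem_erase.2 ⟨Ne.symm hik, hk⟩) (sub_self _), zero_smul]

theorem Finset.prod_erase_sub_ne_zero {R ι : Type*} [CommRing R] [IsDomain R] [DecidableEq ι]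
    {f : ι → R} (hf : Function.Injective f) (s : Finset ι) (k : ι) :
    ∏ j ∈ s.erase k, (f k - f j) ≠ 0 :=
  prod_ne_zero_iff.2 fun _ hj => sub_ne_zero.2 fun h => ne_of_mem_erase hj (hf h).symm

theorem separation_variables_evolutionary_flow_general (N : ℕ)
    (b : ℝ) (hb : b ≠ 0)
    (zf : Fin N → ℝ → ℝ) (hdiff : ∀ k, Differentiable ℝ (zf k))
    (hdistinct : ∀ t : ℝ, Function.Injective fun k => zf k t)
    (A A₄ : ℝ → ℝ) (α : ℝ × ℝ → ℝ)
    (hflow : ∀ z t : ℝ,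
      deriv (fun t' => b * ∏ k : Fin N, (z - zf k t')) t
        = -2 * (A t * z + A₄ t) * (b * ∏ k : Fin N, (z - zf k t))
          + 2 * (b * z ^ 2 + (-b * ∑ j : Fin N, zf j t) * z) * α (z, t)) :
    ∀ (k : Fin N) (t : ℝ),
      deriv (zf k) t
        = 2 * (zf k t * α (zf k t, t)) * (∑ j ∈ Finset.univ.erase k, zf j t)
            / ∏ j ∈ Finset.univ.erase k, (zf k t - zf j t) := by
  intro k t
  have hγ_root : ∏ i, (zf k t - zf i t) = 0 := prod_eq_zero (mem_univ k) (sub_self _)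
  have hγ_deriv :=
    ((HasDerivAt.prod_sub_at_root (fun i _ => (hdiff i t).hasDerivAt) (mem_univ k)).const_mul
      b).deriv
  have hflow_root := hflow (zf k t) t
  rw [hγ_deriv, hγ_root, ← add_sum_erase _ _ (mem_univ k)] at hflow_root
  rw [eq_div_iff (prod_erase_sub_ne_zero (hdistinct t) _ k)]
  apply mul_left_cancel₀ hb
  linear_combination -hflow_root

/-- Equations of motion for the separation variables under the evolutionary
flow: if `γ(z,t) = b ∏ₖ (z − zₖ(t))` and `c(t) = −b ∑ⱼ zⱼ(t)` satisfy
`∂ₜ γ(z,t) = −2 (A(t) z + A₄(t)) γ(z,t) + 2 (b z² + c(t) z) α(z,t)` for all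
`z, t`, then each zero `zₖ` obeys
`zₖ' = 2 wₖ (∑_{j≠k} zⱼ) / ∏_{j≠k}(zₖ − zⱼ)` with `wₖ = zₖ α(zₖ, t)`. -/
theorem separation_variables_evolutionary_flow (N : ℕ) (hN : 1 ≤ N)
    (b : ℝ) (hb : b ≠ 0)
    (zf : Fin N → ℝ → ℝ) (hdiff : ∀ k, Differentiable ℝ (zf k))
    (hdistinct : ∀ t : ℝ, Function.Injective fun k => zf k t)
    (A A₄ : ℝ → ℝ) (α : ℝ × ℝ → ℝ)
    (hflow : ∀ z t : ℝ,
      deriv (fun t' => b * ∏ k : Fin N, (z - zf k t')) t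
        = -2 * (A t * z + A₄ t) * (b * ∏ k : Fin N, (z - zf k t))
          + 2 * (b * z ^ 2 + (-b * ∑ j : Fin N, zf j t) * z) * α (z, t)) :
    ∀ (k : Fin N) (t : ℝ),
      deriv (zf k) t
        = 2 * (zf k t * α (zf k t, t)) * (∑ j ∈ Finset.univ.erase k, zf j t)
            / ∏ j ∈ Finset.univ.erase k, (zf k t - zf j t) :=
  separation_variables_evolutionary_flow_general N b hb zf hdiff hdistinct A A₄ α hflow
end

section
/- Let N ≥ 1 be an integer, b ∈ ℝ, and z₁, …, z_N pairwise distinct real numbers, w₁, …, w_N nonzero real numbers, and n an integer with 1 ≤ n ≤ N. (a) If d_k := −2 w_k / ∏_{j≠k}(z_k − z_j) for each k, then ∑_{k=1}^{N} ( b z_k^{N−n} / (−2 w_k) ) · d_k equals b if n = 1 and 0 otherwise. (b) If d_k := 2 w_k ( ∑_{j≠k} z_j ) / ∏_{j≠k}(z_k − z_j) for each k, then ∑_{k=1}^{N} ( b z_k^{N−n} / (−2 w_k) ) · d_k equals b if n = 2 and 0 otherwise. -/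
/-!
Reducing a polynomial `p` of degree at most `N` modulo the nodal polynomial `∏ⱼ (X - zⱼ)` and
reading off the coefficient of `X^(N-1)` of its Lagrange interpolant gives
`∑ₖ p(zₖ) / ∏_{j≠k} (zₖ - zⱼ) = p_{N-1} + p_N ∑ⱼ zⱼ`.
After the weights `wₖ` cancel, (a) is this identity for `p = X^(N-n)`, and (b), since
`∑_{j≠k} zⱼ = ∑ⱼ zⱼ - zₖ`, is the identity for `p = X^(N-n) (∑ⱼ zⱼ - X)`.
-/

open Polynomial Finset

namespace Lagrange

variable {F ι : Type*} [Field F] {s : Finset ι} {v : ι → F}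

theorem degree_sub_C_coeff_mul_nodal_lt {P : F[X]} (hP : P.natDegree ≤ #s) :
    (P - C (P.coeff #s) * nodal s v).degree < #s := by
  have hQ : (P - C (P.coeff #s) * nodal s v).natDegree ≤ #s :=
    (natDegree_sub_le _ _).trans <| max_le hP <| (natDegree_C_mul_le _ _).trans natDegree_nodal.le
  rw [degree_lt_iff_coeff_zero]
  intro m hm
  rcases hm.eq_or_lt with rfl | hm
  · rw [coeff_sub, coeff_C_mul, ← natDegree_nodal (s := s) (v := v), nodal_monic.coeff_natDegree,
      mul_one, sub_self]
  · exact coeff_eq_zero_of_natDegree_lt (hQ.trans_lt hm)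

theorem coeff_add_coeff_mul_sum_eq_sum [DecidableEq ι] (hvs : Set.InjOn v s) (hs : s.Nonempty)
    {P : F[X]} (hP : P.natDegree ≤ #s) :
    P.coeff (#s - 1) + P.coeff #s * ∑ i ∈ s, v i =
      ∑ i ∈ s, P.eval (v i) / ∏ j ∈ s.erase i, (v i - v j) := by
  have hnodal : (nodal s v).coeff (#s - 1) = -∑ i ∈ s, v i :=
    prod_X_sub_C_coeff_card_pred s v hs.card_pos
  rw [← sub_neg_eq_add, ← mul_neg, ← hnodal, ← coeff_C_mul, ← coeff_sub,
    coeff_eq_sum hvs (degree_sub_C_coeff_mul_nodal_lt hP)]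
  refine sum_congr rfl fun i hi => ?_
  rw [eval_sub, eval_mul, eval_nodal_at_node hi, mul_zero, sub_zero]

end Lagrange

section

variable {F : Type*} [Field F] {N n : ℕ} {z : Fin N → F}

theorem sum_pow_div_prod_sub_eq (hz : Function.Injective z) (hn1 : 1 ≤ n) (hn2 : n ≤ N) :
    ∑ k, z k ^ (N - n) / ∏ j ∈ univ.erase k, (z k - z j) = if n = 1 then 1 else 0 := by
  have hN : #(univ : Finset (Fin N)) = N := card_fin N
  have hdeg : ((X : F[X]) ^ (N - n)).degree < #(univ : Finset (Fin N)) := by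
    rw [degree_X_pow, hN]
    exact_mod_cast (by omega)
  simp only [← eval_X_pow (R := F), ← Lagrange.coeff_eq_sum hz.injOn hdeg, hN, coeff_X_pow,
    show N - 1 = N - n ↔ n = 1 by omega]

theorem sum_pow_mul_sum_erase_div_prod_sub_eq (hz : Function.Injective z) (hn1 : 1 ≤ n)
    (hn2 : n ≤ N) :
    ∑ k, z k ^ (N - n) * (∑ j ∈ univ.erase k, z j) / ∏ j ∈ univ.erase k, (z k - z j) =
      if n = 2 then -1 else 0 := by
  have hN : #(univ : Finset (Fin N)) = N := card_fin N
  set p : F[X] := C (∑ j, z j) * X ^ (N - n) - X ^ (N - n + 1)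
  have hdeg : p.natDegree ≤ #(univ : Finset (Fin N)) := by
    rw [hN]
    exact (natDegree_sub_le _ _).trans <| max_le
      ((natDegree_C_mul_X_pow_le _ (N - n)).trans (N.sub_le n))
      ((natDegree_X_pow_le (N - n + 1)).trans (by omega))
  have hsum := Lagrange.coeff_add_coeff_mul_sum_eq_sum hz.injOn
    (univ_nonempty_iff.mpr ⟨⟨0, by omega⟩⟩) hdeg
  have heval : ∀ k, p.eval (z k) = z k ^ (N - n) * ∑ j ∈ univ.erase k, z j := fun k => by
    rw [sum_erase_eq_sub (mem_univ k)]
    simp only [p, eval_sub, eval_C_mul, eval_X_pow]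
    ring
  simp only [heval, hN, p, coeff_sub, coeff_C_mul, coeff_X_pow,
    show N - 1 = N - n ↔ n = 1 by omega, show N - 1 = N - n + 1 ↔ n = 2 by omega,
    if_neg (show ¬N = N - n by omega), show N = N - n + 1 ↔ n = 1 by omega] at hsum
  rw [← hsum]
  split_ifs <;> first | omega | ring

end

theorem abelian_coordinates_linear_flow_general (N : ℕ) (b : ℝ)
    (z : Fin N → ℝ) (hz : Function.Injective z)
    (w : Fin N → ℝ) (hw : ∀ k, w k ≠ 0)
    (n : ℕ) (hn1 : 1 ≤ n) (hn2 : n ≤ N) :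
    (∑ k : Fin N,
        (b * z k ^ (N - n) / (-2 * w k))
          * (-2 * w k / ∏ j ∈ Finset.univ.erase k, (z k - z j))
      = if n = 1 then b else 0) ∧
    (∑ k : Fin N,
        (b * z k ^ (N - n) / (-2 * w k))
          * (2 * w k * (∑ j ∈ Finset.univ.erase k, z j)
              / ∏ j ∈ Finset.univ.erase k, (z k - z j))
      = if n = 2 then b else 0) := by
  have hw' : ∀ k, -2 * w k ≠ 0 := fun k => mul_ne_zero (by norm_num) (hw k)
  constructor
  · calc _ = b * ∑ k, z k ^ (N - n) / ∏ j ∈ univ.erase k, (z k - z j) := by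
          rw [mul_sum]
          exact sum_congr rfl fun k _ => by rw [div_mul_div_cancel₀ (hw' k), mul_div_assoc]
      _ = _ := by rw [sum_pow_div_prod_sub_eq hz hn1 hn2, mul_ite, mul_one, mul_zero]
  · calc _ = -b * ∑ k, z k ^ (N - n) * (∑ j ∈ univ.erase k, z j) /
              ∏ j ∈ univ.erase k, (z k - z j) := by
          rw [mul_sum]
          exact sum_congr rfl fun k _ => by field_simp [hw k]
      _ = _ := by rw [sum_pow_mul_sum_erase_div_prod_sub_eq hz hn1 hn2]; split_ifs <;> ring

/-- Linearization of the Abelian coordinates along the mKdV flows: with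
pairwise distinct `zₖ` and nonzero `wₖ`,
(a) `∑ₖ (b zₖ^{N−n} / (−2wₖ)) · (−2wₖ / ∏_{j≠k}(zₖ−zⱼ)) = b δ_{n,1}` and
(b) `∑ₖ (b zₖ^{N−n} / (−2wₖ)) · (2wₖ (∑_{j≠k} zⱼ) / ∏_{j≠k}(zₖ−zⱼ)) = b δ_{n,2}`. -/
theorem abelian_coordinates_linear_flow (N : ℕ) (hN : 1 ≤ N) (b : ℝ)
    (z : Fin N → ℝ) (hz : Function.Injective z)
    (w : Fin N → ℝ) (hw : ∀ k, w k ≠ 0)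
    (n : ℕ) (hn1 : 1 ≤ n) (hn2 : n ≤ N) :
    (∑ k : Fin N,
        (b * z k ^ (N - n) / (-2 * w k))
          * (-2 * w k / ∏ j ∈ Finset.univ.erase k, (z k - z j))
      = if n = 1 then b else 0) ∧
    (∑ k : Fin N,
        (b * z k ^ (N - n) / (-2 * w k))
          * (2 * w k * (∑ j ∈ Finset.univ.erase k, z j)
              / ∏ j ∈ Finset.univ.erase k, (z k - z j))
      = if n = 2 then b else 0) :=
  abelian_coordinates_linear_flow_general N b z hz w hw n hn1 hn2
end
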